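/- Let f : {−1,1}^n → {0,1} with E f > 0. Then totinf(f) ≥ (1/2) · E f · ln(1 / E f). -/

import Mathlib

open Finset MeasureTheory
open scoped BigOperators Classical

/-- Expectation over the uniform measure on the hypercube `{-1,1}^n` (coded by `Bool`). -/
noncomputable def expectation {n : ℕ} (f : (Fin n → Bool) → ℝ) : ℝ :=
  (∑ x : Fin n → Bool, f x) / 2 ^ n

/-- Probability of an event under the uniform measure on the hypercube. -/
noncomputable def pr {n : ℕ} (P : (Fin n → Bool) → Prop) : ℝ :=
  expectation (fun x => if P x then (1 : ℝ) else 0)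

/-- Walsh function `χ_S`. -/
noncomputable def walsh {n : ℕ} (S : Finset (Fin n)) (x : Fin n → Bool) : ℝ :=
  ∏ j ∈ S, (if x j then (1 : ℝ) else -1)

/-- Fourier--Walsh coefficient `f̂(S)`. -/
noncomputable def fwCoeff {n : ℕ} (f : (Fin n → Bool) → ℝ) (S : Finset (Fin n)) : ℝ :=
  expectation (fun x => f x * walsh S x)

/-- T-influence `Inf_S(f) = ∑_{T ⊇ S} f̂(T)^2`. -/
noncomputable def TInf {n : ℕ} (f : (Fin n → Bool) → ℝ) (S : Finset (Fin n)) : ℝ :=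
  ∑ T ∈ Finset.univ.filter (fun T : Finset (Fin n) => S ⊆ T), fwCoeff f T ^ 2

/-- Fourier weight at degrees `≥ d`. -/
noncomputable def Wge {n : ℕ} (d : ℕ) (f : (Fin n → Bool) → ℝ) : ℝ :=
  ∑ T ∈ Finset.univ.filter (fun T : Finset (Fin n) => d ≤ T.card), fwCoeff f T ^ 2

/-- Flip coordinate `i`. -/
def flipBit {n : ℕ} (y : Fin n → Bool) (i : Fin n) : Fin n → Bool :=
  Function.update y i (!(y i))

/-- `i` is `S`-pivotal for `f` on input `x`. -/
def pivotal {n : ℕ} (f : (Fin n → Bool) → ℝ) (S : Finset (Fin n)) (i : Fin n)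
    (x : Fin n → Bool) : Prop :=
  ∃ y : Fin n → Bool, (∀ j, j ∉ S → y j = x j) ∧ f y ≠ f (flipBit y i)

/-- Joint influence `JInf_S(f)`. -/
noncomputable def JInf {n : ℕ} (f : (Fin n → Bool) → ℝ) (S : Finset (Fin n)) : ℝ :=
  pr (fun x => ∀ i ∈ S, pivotal f S i x)

/-- Single-bit discrete partial derivative. -/
noncomputable def deriv1 {n : ℕ} (i : Fin n) (f : (Fin n → Bool) → ℝ) :
    (Fin n → Bool) → ℝ :=
  fun x => (f (Function.update x i true) - f (Function.update x i false)) / 2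

/-- Multi-bit discrete partial derivative `∂_S f`. -/
noncomputable def derivS {n : ℕ} (S : Finset (Fin n)) (f : (Fin n → Bool) → ℝ) :
    (Fin n → Bool) → ℝ :=
  S.toList.foldr deriv1 f

/-- Heat semigroup `P_t`. -/
noncomputable def heat {n : ℕ} (t : ℝ) (g : (Fin n → Bool) → ℝ) : (Fin n → Bool) → ℝ :=
  fun x => ∑ S : Finset (Fin n), Real.exp (-(S.card : ℝ) * t) * fwCoeff g S * walsh S x

/-- Squared `L²` norm. -/
noncomputable def norm2sq {n : ℕ} (g : (Fin n → Bool) → ℝ) : ℝ :=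
  expectation (fun x => g x ^ 2)

/-- Total influence. -/
noncomputable def totinf {n : ℕ} (f : (Fin n → Bool) → ℝ) : ℝ :=
  ∑ i : Fin n, TInf f {i}



lemma two_pow_ne (n : ℕ) : ((2:ℝ)^n) ≠ 0 := by positivity

lemma kernel {n : ℕ} (x y : Fin n → Bool) :
    ∑ S : Finset (Fin n), walsh S x * walsh S y = if x = y then (2:ℝ)^n else 0 := by
  classical
  set h : Fin n → ℝ := fun j => (if x j then (1:ℝ) else -1) * (if y j then (1:ℝ) else -1)
    with hh
  have h1 : ∀ S : Finset (Fin n), walsh S x * walsh S y = ∏ j ∈ S, h j := by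
    intro S; rw [walsh, walsh, Finset.prod_mul_distrib]
  have h2 : ∑ S : Finset (Fin n), ∏ j ∈ S, h j = ∏ j, (1 + h j) := by
    rw [Fintype.prod_add (fun _ => (1:ℝ)) h]
    refine Fintype.sum_equiv (Function.Involutive.toPerm compl compl_compl) _ _ fun t => ?_
    simp [Function.Involutive.toPerm, compl_compl]
  rw [Finset.sum_congr rfl fun S _ => h1 S, h2]
  by_cases hxy : x = y
  · subst hxy
    have hj : ∀ j : Fin n, 1 + h j = 2 := by
      intro j; by_cases hb : x j <;> simp [hh, hb] <;> norm_num
    rw [Finset.prod_congr rfl fun j _ => hj j, if_pos rfl, Finset.prod_const]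
    simp
  · rw [if_neg hxy]
    obtain ⟨j, hj⟩ : ∃ j, x j ≠ y j := by
      by_contra hc; push_neg at hc; exact hxy (funext hc)
    refine Finset.prod_eq_zero (Finset.mem_univ j) ?_
    rcases Bool.eq_false_or_eq_true (x j) with hb | hb <;>
      rcases Bool.eq_false_or_eq_true (y j) with hb' | hb' <;>
      simp_all [hh] <;> norm_num

lemma inversion {n : ℕ} (g : (Fin n → Bool) → ℝ) (x : Fin n → Bool) :
    ∑ S : Finset (Fin n), fwCoeff g S * walsh S x = g x := by
  classical
  simp only [fwCoeff, expectation, div_mul_eq_mul_div, ← Finset.sum_div, Finset.sum_mul]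
  rw [Finset.sum_comm]
  have key : ∀ y : Fin n → Bool, ∑ S : Finset (Fin n), g y * walsh S y * walsh S x
      = if y = x then g y * 2^n else 0 := by
    intro y
    have : ∀ S : Finset (Fin n), g y * walsh S y * walsh S x
        = g y * (walsh S y * walsh S x) := fun S => by ring
    rw [Finset.sum_congr rfl fun S _ => this S, ← Finset.mul_sum, kernel y x]
    split <;> simp
  rw [Finset.sum_congr rfl fun y _ => key y, Finset.sum_ite_eq' Finset.univ x
    (fun y => g y * 2^n), if_pos (Finset.mem_univ x)]
  field_simp

lemma parseval {n : ℕ} (g : (Fin n → Bool) → ℝ) :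
    ∑ S : Finset (Fin n), fwCoeff g S ^ 2 = (∑ x : Fin n → Bool, g x ^ 2) / 2 ^ n := by
  classical
  have step : ∀ S : Finset (Fin n), fwCoeff g S ^ 2
      = (∑ x : Fin n → Bool, g x * walsh S x * fwCoeff g S) / 2 ^ n := by
    intro S
    rw [pow_two]
    conv_lhs => rw [fwCoeff, expectation]
    rw [div_mul_eq_mul_div, Finset.sum_mul]
    rfl
  rw [Finset.sum_congr rfl fun S _ => step S, ← Finset.sum_div]
  congr 1
  rw [Finset.sum_comm]
  refine Finset.sum_congr rfl fun x _ => ?_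
  rw [pow_two]
  have : ∀ S : Finset (Fin n), g x * walsh S x * fwCoeff g S
      = g x * (fwCoeff g S * walsh S x) := fun S => by ring
  rw [Finset.sum_congr rfl fun S _ => this S, ← Finset.mul_sum, inversion]

lemma flip_invol {n : ℕ} (i : Fin n) :
    Function.Involutive (fun x : Fin n → Bool => flipBit x i) := by
  intro x
  simp [flipBit, Function.update_idem]

lemma sum_flip {n : ℕ} (i : Fin n) (H : (Fin n → Bool) → ℝ) :
    ∑ x : Fin n → Bool, H (flipBit x i) = ∑ x : Fin n → Bool, H x :=
  Fintype.sum_equiv ((flip_invol i).toPerm) _ _ (fun x => rfl)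

lemma flip_apply_self {n : ℕ} (x : Fin n → Bool) (i : Fin n) : flipBit x i i = !(x i) := by
  simp [flipBit]

lemma flip_apply_ne {n : ℕ} (x : Fin n → Bool) {i j : Fin n} (h : j ≠ i) :
    flipBit x i j = x j := by
  simp [flipBit, Function.update_of_ne h]

lemma walsh_flip {n : ℕ} {S : Finset (Fin n)} {i : Fin n} (hi : i ∉ S) (x : Fin n → Bool) :
    walsh S (flipBit x i) = walsh S x := by
  refine Finset.prod_congr rfl fun j hj => ?_
  have hne : j ≠ i := by rintro rfl; exact hi hj
  rw [flip_apply_ne x hne]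

lemma deriv1_flip {n : ℕ} (i : Fin n) (f : (Fin n → Bool) → ℝ) (x : Fin n → Bool) :
    deriv1 i f (flipBit x i) = deriv1 i f x := by
  simp [deriv1, flipBit, Function.update_idem]

lemma deriv1_eq {n : ℕ} (i : Fin n) (f : (Fin n → Bool) → ℝ) (x : Fin n → Bool) :
    deriv1 i f x = (if x i then (1:ℝ) else -1) * (f x - f (flipBit x i)) / 2 := by
  rcases Bool.eq_false_or_eq_true (x i) with hb | hb
  · have h2 : flipBit x i = Function.update x i false := by simp [flipBit, hb]
    have h1 : Function.update x i true = x := by rw [← hb]; exact Function.update_eq_self i x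
    rw [deriv1, hb, h1, h2]; simp
  · have h2 : flipBit x i = Function.update x i true := by simp [flipBit, hb]
    have h1 : Function.update x i false = x := by rw [← hb]; exact Function.update_eq_self i x
    rw [deriv1, hb, h1, h2]
    simp only [Bool.false_eq_true, if_false]
    ring

lemma fwCoeff_deriv1 {n : ℕ} (i : Fin n) (f : (Fin n → Bool) → ℝ) (S : Finset (Fin n)) :
    fwCoeff (deriv1 i f) S = if i ∈ S then 0 else fwCoeff f (insert i S) := by
  classical
  by_cases hi : i ∈ S
  · rw [if_pos hi]
    have hS : S = insert i (S.erase i) := (Finset.insert_erase hi).symm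
    have hW : ∀ x : Fin n → Bool, walsh S x
        = (if x i then (1:ℝ) else -1) * walsh (S.erase i) x := by
      intro x
      conv_lhs => rw [hS]
      rw [walsh, walsh]
      exact Finset.prod_insert (Finset.notMem_erase i S)
    have pw : ∀ x : Fin n → Bool,
        deriv1 i f (flipBit x i) * walsh S (flipBit x i) = - (deriv1 i f x * walsh S x) := by
      intro x
      rw [hW, hW, deriv1_flip, walsh_flip (Finset.notMem_erase i S), flip_apply_self]
      rcases Bool.eq_false_or_eq_true (x i) with hb | hb <;> rw [hb] <;> simp <;> ring
    have key : ∑ x : Fin n → Bool, deriv1 i f x * walsh S x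
        = - ∑ x : Fin n → Bool, deriv1 i f x * walsh S x := by
      calc ∑ x : Fin n → Bool, deriv1 i f x * walsh S x
          = ∑ x : Fin n → Bool, deriv1 i f (flipBit x i) * walsh S (flipBit x i) :=
            (sum_flip i (fun x => deriv1 i f x * walsh S x)).symm
        _ = ∑ x : Fin n → Bool, - (deriv1 i f x * walsh S x) :=
            Finset.sum_congr rfl fun x _ => pw x
        _ = - ∑ x : Fin n → Bool, deriv1 i f x * walsh S x := by
            rw [Finset.sum_neg_distrib]
    have hz : ∑ x : Fin n → Bool, deriv1 i f x * walsh S x = 0 := by linarith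
    rw [fwCoeff, expectation]
    simp [hz]
  · rw [if_neg hi]
    have hW : ∀ x : Fin n → Bool, walsh (insert i S) x
        = (if x i then (1:ℝ) else -1) * walsh S x := fun x => Finset.prod_insert hi
    have pw : ∀ x : Fin n → Bool,
        f (flipBit x i) * walsh (insert i S) (flipBit x i)
        = - (f (flipBit x i) * ((if x i then (1:ℝ) else -1) * walsh S x)) := by
      intro x
      rw [hW, walsh_flip hi, flip_apply_self]
      rcases Bool.eq_false_or_eq_true (x i) with hb | hb <;> rw [hb] <;> simp <;> ring
    have key : ∑ x : Fin n → Bool, f x * walsh (insert i S) x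
        = - ∑ x : Fin n → Bool, f (flipBit x i) * ((if x i then (1:ℝ) else -1) * walsh S x) := by
      calc ∑ x : Fin n → Bool, f x * walsh (insert i S) x
          = ∑ x : Fin n → Bool, f (flipBit x i) * walsh (insert i S) (flipBit x i) :=
            (sum_flip i (fun x => f x * walsh (insert i S) x)).symm
        _ = ∑ x : Fin n → Bool,
              - (f (flipBit x i) * ((if x i then (1:ℝ) else -1) * walsh S x)) :=
            Finset.sum_congr rfl fun x _ => pw x
        _ = _ := by rw [Finset.sum_neg_distrib]
    have main : ∑ x : Fin n → Bool, deriv1 i f x * walsh S x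
        = ∑ x : Fin n → Bool, f x * walsh (insert i S) x := by
      have expand : ∀ x : Fin n → Bool, deriv1 i f x * walsh S x
          = (f x * ((if x i then (1:ℝ) else -1) * walsh S x)
            - f (flipBit x i) * ((if x i then (1:ℝ) else -1) * walsh S x)) / 2 := by
        intro x; rw [deriv1_eq]; ring
      rw [Finset.sum_congr rfl fun x _ => expand x, ← Finset.sum_div,
        Finset.sum_sub_distrib]
      have h1 : ∑ x : Fin n → Bool, f x * ((if x i then (1:ℝ) else -1) * walsh S x)
          = ∑ x : Fin n → Bool, f x * walsh (insert i S) x := by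
        refine Finset.sum_congr rfl fun x _ => ?_; rw [hW]
      rw [h1]
      linarith [key]
    rw [fwCoeff, fwCoeff, expectation, expectation, main]

lemma TInf_single {n : ℕ} (f : (Fin n → Bool) → ℝ) (i : Fin n) :
    TInf f {i} = (∑ x : Fin n → Bool, (deriv1 i f x) ^ 2) / 2 ^ n := by
  classical
  rw [← parseval (deriv1 i f)]
  have h1 : ∀ S : Finset (Fin n), fwCoeff (deriv1 i f) S ^ 2
      = if i ∉ S then fwCoeff f (insert i S) ^ 2 else 0 := by
    intro S; rw [fwCoeff_deriv1]; by_cases h : i ∈ S <;> simp [h]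
  have h2 : ∑ S : Finset (Fin n), fwCoeff (deriv1 i f) S ^ 2
      = ∑ S ∈ Finset.univ.filter (fun S : Finset (Fin n) => i ∉ S),
          fwCoeff f (insert i S) ^ 2 := by
    rw [Finset.sum_filter]; exact Finset.sum_congr rfl fun S _ => h1 S
  rw [h2, TInf]
  refine Finset.sum_bij' (fun T _ => Finset.erase T i) (fun S _ => insert i S)
    ?_ ?_ ?_ ?_ ?_
  · intro T hT
    simp only [Finset.mem_filter, Finset.mem_univ, true_and] at hT ⊢
    exact Finset.notMem_erase i T
  · intro S hS
    simp only [Finset.mem_filter, Finset.mem_univ, true_and, Finset.singleton_subset_iff] at hS ⊢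
    exact Finset.mem_insert_self i S
  · intro T hT
    simp only [Finset.mem_filter, Finset.mem_univ, true_and,
      Finset.singleton_subset_iff] at hT
    exact Finset.insert_erase hT
  · intro S hS
    simp only [Finset.mem_filter, Finset.mem_univ, true_and] at hS
    exact Finset.erase_insert hS
  · intro T hT
    simp only [Finset.mem_filter, Finset.mem_univ, true_and,
      Finset.singleton_subset_iff] at hT
    rw [Finset.insert_erase hT]


lemma logb_lemma {t : ℝ} (h0 : 0 ≤ t) (h1 : t ≤ 1) : t ≤ Real.logb 2 (1 + t) := by
  have hexp : Real.exp (t * Real.log 2) ≤ 1 + t := by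
    have hc := convexOn_exp.2 (Set.mem_univ (0:ℝ)) (Set.mem_univ (Real.log 2))
      ((by linarith : (0:ℝ) ≤ 1 - t)) h0 (by ring)
    simp only [smul_eq_mul, mul_zero, zero_add, Real.exp_zero] at hc
    rw [Real.exp_log (by norm_num)] at hc
    linarith
  have hlog : t * Real.log 2 ≤ Real.log (1 + t) := by
    rw [Real.le_log_iff_exp_le (by linarith)]
    exact hexp
  rw [Real.logb, le_div_iff₀ (Real.log_pos (by norm_num))]
  linarith

lemma Lb_lemma_aux {a b : ℝ} (hb : 0 ≤ b) (hba : b ≤ a) :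
    a * Real.logb 2 a + b * Real.logb 2 b + 2 * b ≤ (a + b) * Real.logb 2 (a + b) := by
  rcases eq_or_lt_of_le hb with hb0 | hb0
  · rw [← hb0]; simp [Real.logb_zero]
  have ha : 0 < a := lt_of_lt_of_le hb0 hba
  set t : ℝ := b / a with ht
  have ht0 : 0 ≤ t := by positivity
  have ht1 : t ≤ 1 := by rw [ht, div_le_one ha]; exact hba
  have hat : a * t = b := by rw [ht, mul_comm]; exact div_mul_cancel₀ b ha.ne'
  have hab : a + b = a * (1 + t) := by rw [mul_add, mul_one, hat]
  have h1 : Real.logb 2 (a + b) = Real.logb 2 a + Real.logb 2 (1 + t) := by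
    rw [hab, Real.logb_mul ha.ne' (by nlinarith)]
  have h2 : b ≤ a * Real.logb 2 (1 + t) := by
    have := mul_le_mul_of_nonneg_left (logb_lemma ht0 ht1) ha.le
    linarith
  have h3 : Real.logb 2 b + 1 ≤ Real.logb 2 (a + b) := by
    have hd : Real.logb 2 ((a + b) / b) = Real.logb 2 (a + b) - Real.logb 2 b :=
      Real.logb_div (by linarith) hb0.ne'
    have h2le : (2 : ℝ) ≤ (a + b) / b := by
      rw [le_div_iff₀ hb0]; linarith
    have h22 : Real.logb 2 2 = 1 := Real.logb_self_eq_one (by norm_num)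
    have hmono : Real.logb 2 2 ≤ Real.logb 2 ((a+b)/b) :=
      Real.logb_le_logb_of_le (by norm_num) (by norm_num) h2le
    rw [hd] at hmono
    linarith
  have hA : a * Real.logb 2 (a + b) = a * Real.logb 2 a + a * Real.logb 2 (1 + t) := by
    rw [h1]; ring
  have hB : b * Real.logb 2 b + b ≤ b * Real.logb 2 (a + b) := by
    have := mul_le_mul_of_nonneg_left h3 hb
    linarith [this]
  nlinarith [hA, h2, hB]

lemma Lb_lemma {a b : ℝ} (ha : 0 ≤ a) (hb : 0 ≤ b) :
    a * Real.logb 2 a + b * Real.logb 2 b + 2 * min a b ≤ (a + b) * Real.logb 2 (a + b) := by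
  rcases le_total b a with h | h
  · rw [min_eq_right h]; exact Lb_lemma_aux hb h
  · rw [min_eq_left h, add_comm a b, add_comm (a * Real.logb 2 a)]
    exact Lb_lemma_aux ha h

noncomputable def cA {n : ℕ} (f : (Fin n → Bool) → ℝ) : ℕ :=
  ∑ x : Fin n → Bool, if f x = 1 then 1 else 0

noncomputable def cB {n : ℕ} (f : (Fin n → Bool) → ℝ) : ℕ :=
  ∑ i : Fin n, ∑ x : Fin n → Bool,
    if f (Function.update x i true) ≠ f (Function.update x i false) then 1 else 0

lemma sum_cons_split {n : ℕ} (F : (Fin (n+1) → Bool) → ℕ) :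
    ∑ x : Fin (n+1) → Bool, F x
      = (∑ z : Fin n → Bool, F (Fin.cons true z)) + ∑ z : Fin n → Bool, F (Fin.cons false z) := by
  rw [← Fintype.sum_equiv (Fin.consEquiv (fun _ => Bool)) (fun p => F (Fin.cons p.1 p.2)) F
    (fun p => rfl)]
  rw [Fintype.sum_prod_type]
  simp

lemma harper (n : ℕ) (f : (Fin n → Bool) → ℝ) :
    2 * ((cA f : ℝ) * n - (cA f : ℝ) * Real.logb 2 (cA f)) ≤ (cB f : ℝ) := by
  induction n with
  | zero =>
      have hB : cB f = 0 := by simp [cB]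
      have hA : cA f ≤ 1 := by
        rw [cA, Fintype.sum_eq_single (default : Fin 0 → Bool)
          (fun x hx => absurd (Subsingleton.elim x default) hx)]
        split <;> norm_num
      interval_cases h : cA f <;> simp_all
  | succ n ih =>
      set g : Bool → (Fin n → Bool) → ℝ := fun b z => f (Fin.cons b z) with hg
      set cD : ℕ := ∑ z : Fin n → Bool, if g true z ≠ g false z then 1 else 0 with hcD
      -- cA splits
      have hAsplit : cA f = cA (g true) + cA (g false) := by
        rw [cA, sum_cons_split]; rfl
      -- cB splits
      have hBsplit : cB f = cB (g true) + cB (g false) + 2 * cD := by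
        rw [cB, Fin.sum_univ_succ]
        have h0 : ∑ x : Fin (n+1) → Bool,
            (if f (Function.update x 0 true) ≠ f (Function.update x 0 false) then 1 else 0)
            = 2 * cD := by
          rw [sum_cons_split (fun x =>
            if f (Function.update x 0 true) ≠ f (Function.update x 0 false) then 1 else 0)]
          simp only [Fin.update_cons_zero]
          rw [hcD]; ring
        have hsucc : ∀ j : Fin n, ∑ x : Fin (n+1) → Bool,
            (if f (Function.update x j.succ true) ≠ f (Function.update x j.succ false)
              then 1 else 0)
            = (∑ z : Fin n → Bool,
                if g true (Function.update z j true) ≠ g true (Function.update z j false)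
                then 1 else 0)
              + ∑ z : Fin n → Bool,
                if g false (Function.update z j true) ≠ g false (Function.update z j false)
                then 1 else 0 := by
          intro j
          rw [sum_cons_split (fun x =>
            if f (Function.update x j.succ true) ≠ f (Function.update x j.succ false)
            then 1 else 0)]
          simp only [← Fin.cons_update, hg]
        rw [h0, Finset.sum_congr rfl fun j _ => hsucc j, Finset.sum_add_distrib]
        rw [cB, cB]
        ring
      -- difference bounds
      have hd1 : cA (g true) ≤ cA (g false) + cD := by
        rw [cA, cA, hcD, ← Finset.sum_add_distrib]
        refine Finset.sum_le_sum fun z _ => ?_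
        by_cases h1 : g true z = 1 <;> by_cases h2 : g false z = 1 <;> simp_all [eq_comm]
      have hd2 : cA (g false) ≤ cA (g true) + cD := by
        rw [cA, cA, hcD, ← Finset.sum_add_distrib]
        refine Finset.sum_le_sum fun z _ => ?_
        by_cases h1 : g true z = 1 <;> by_cases h2 : g false z = 1 <;> simp_all [eq_comm]
      -- numbers
      have ha : (0:ℝ) ≤ (cA (g true) : ℝ) := Nat.cast_nonneg _
      have hb : (0:ℝ) ≤ (cA (g false) : ℝ) := Nat.cast_nonneg _
      have hd1' : ((cA (g true)) : ℝ) ≤ (cA (g false) : ℝ) + (cD : ℝ) := by exact_mod_cast hd1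
      have hd2' : ((cA (g false)) : ℝ) ≤ (cA (g true) : ℝ) + (cD : ℝ) := by exact_mod_cast hd2
      have iha := ih (g true)
      have ihb := ih (g false)
      have hL := Lb_lemma ha hb
      have hmin : (cA (g true) : ℝ) + (cA (g false) : ℝ)
          - 2 * min (cA (g true) : ℝ) (cA (g false) : ℝ) ≤ (cD : ℝ) := by
        rcases le_total ((cA (g true)):ℝ) ((cA (g false)):ℝ) with h | h
        · rw [min_eq_left h]; linarith
        · rw [min_eq_right h]; linarith
      have hcast : (cA f : ℝ) = (cA (g true) : ℝ) + (cA (g false) : ℝ) := by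
        rw [hAsplit]; push_cast; ring
      have hcastB : (cB f : ℝ) = (cB (g true) : ℝ) + (cB (g false) : ℝ) + 2 * (cD : ℝ) := by
        rw [hBsplit]; push_cast; ring
      rw [hcast, hcastB]
      push_cast
      have e1 : ((cA (g true) : ℝ) + (cA (g false) : ℝ)) * ((n:ℝ)+1)
          = (cA (g true) : ℝ) * (n:ℝ) + (cA (g false) : ℝ) * (n:ℝ)
            + (cA (g true) : ℝ) + (cA (g false) : ℝ) := by ring
      linarith [iha, ihb, hL, hmin, e1]

lemma deriv1_sq {n : ℕ} (f : (Fin n → Bool) → ℝ) (hf : ∀ x, f x = 0 ∨ f x = 1)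
    (i : Fin n) (x : Fin n → Bool) :
    (deriv1 i f x) ^ 2
      = (if f (Function.update x i true) ≠ f (Function.update x i false)
          then (1:ℝ) else 0) / 4 := by
  rw [deriv1]
  rcases hf (Function.update x i true) with h1 | h1 <;>
    rcases hf (Function.update x i false) with h2 | h2 <;>
      rw [h1, h2] <;> norm_num

/-- weak functional version of the edge isoperimetric inequality
(log-Sobolev consequence). -/
theorem statement11 (n : ℕ) (f : (Fin n → Bool) → ℝ) (hf : ∀ x, f x = 0 ∨ f x = 1)
    (hpos : 0 < expectation f) :
    totinf f ≥ (1 / 2) * expectation f * Real.log (1 / expectation f) := by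
  classical
  have hcA : (cA f : ℝ) = ∑ x : Fin n → Bool, (if f x = 1 then (1:ℝ) else 0) := by
    rw [cA]; push_cast; rfl
  have hE : expectation f = (cA f : ℝ) / 2 ^ n := by
    rw [expectation, hcA]
    congr 1
    refine Finset.sum_congr rfl fun x _ => ?_
    rcases hf x with h | h <;> rw [h] <;> norm_num
  have hN : (0:ℝ) < 2 ^ n := by positivity
  have hapos : (0:ℝ) < (cA f : ℝ) := by
    by_contra hc
    push_neg at hc
    have h0 : (cA f : ℝ) = 0 := le_antisymm hc (Nat.cast_nonneg _)
    rw [hE, h0] at hpos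
    simp at hpos
  have hale : (cA f : ℝ) ≤ 2 ^ n := by
    have h1 : (cA f : ℕ) ≤ 2 ^ n := by
      rw [cA]
      calc (∑ x : Fin n → Bool, if f x = 1 then 1 else 0)
          ≤ ∑ _x : Fin n → Bool, 1 :=
            Finset.sum_le_sum fun x _ => by split <;> norm_num
        _ = 2 ^ n := by simp [Finset.card_univ]
    exact_mod_cast h1
  have htot : totinf f = (cB f : ℝ) / (4 * 2 ^ n) := by
    rw [totinf]
    have h1 : ∀ i : Fin n, TInf f {i}
        = (∑ x : Fin n → Bool,
            (if f (Function.update x i true) ≠ f (Function.update x i false)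
              then (1:ℝ) else 0)) / (4 * 2 ^ n) := by
      intro i
      rw [TInf_single]
      rw [Finset.sum_congr rfl fun x _ => deriv1_sq f hf i x, ← Finset.sum_div]
      rw [div_div]
    rw [Finset.sum_congr rfl fun i _ => h1 i]
    have hcB : (cB f : ℝ) = ∑ i : Fin n, ∑ x : Fin n → Bool,
        (if f (Function.update x i true) ≠ f (Function.update x i false)
          then (1:ℝ) else 0) := by
      rw [cB]; push_cast; rfl
    rw [hcB, ← Finset.sum_div]
  have hH := harper n f
  have hlog2pos : 0 < Real.log 2 := Real.log_pos (by norm_num)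
  have hlogb : (cA f : ℝ) * n - (cA f : ℝ) * Real.logb 2 (cA f)
      = (cA f : ℝ) * Real.log ((2:ℝ) ^ n / (cA f : ℝ)) / Real.log 2 := by
    rw [Real.log_div (by positivity) hapos.ne', Real.logb]
    rw [Real.log_pow]
    field_simp
  have hlogpos : 0 ≤ Real.log ((2:ℝ) ^ n / (cA f : ℝ)) :=
    Real.log_nonneg (by rw [le_div_iff₀ hapos]; linarith)
  have hlog2le : Real.log 2 ≤ 1 := by
    have := Real.log_two_lt_d9; linarith
  have hBge : 2 * ((cA f:ℝ) * Real.log ((2:ℝ)^n / (cA f:ℝ))) ≤ (cB f : ℝ) := by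
    have h1 : (cA f:ℝ) * Real.log ((2:ℝ)^n/(cA f:ℝ))
        ≤ (cA f:ℝ) * Real.log ((2:ℝ)^n/(cA f:ℝ)) / Real.log 2 := by
      rw [le_div_iff₀ hlog2pos]
      nlinarith [mul_nonneg hapos.le hlogpos]
    calc 2*((cA f:ℝ)*Real.log ((2:ℝ)^n/(cA f:ℝ)))
        ≤ 2*((cA f:ℝ)*Real.log ((2:ℝ)^n/(cA f:ℝ))/Real.log 2) := by linarith
      _ = 2*((cA f:ℝ)*n - (cA f:ℝ)*Real.logb 2 (cA f)) := by rw [hlogb]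
      _ ≤ (cB f : ℝ) := hH
  rw [ge_iff_le, htot, hE]
  have hinv : 1 / ((cA f:ℝ)/2^n) = (2:ℝ)^n/(cA f:ℝ) := one_div_div _ _
  rw [hinv]
  have heq : (1/2) * ((cA f:ℝ)/2^n) * Real.log ((2:ℝ)^n/(cA f:ℝ))
      = (2*((cA f:ℝ)*Real.log ((2:ℝ)^n/(cA f:ℝ)))) / (4*2^n) := by
    field_simp
    ring
  rw [heq]
  gcongr
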